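/- Let h : {0,1}* → {0,1}* be an r-uniform morphism (r ≥ 1) and let 𝐮 be an infinite fixed point of h (indexed from 0). If a finite binary word v is markable with respect to h and 𝐮, and v occurs in 𝐮 at positions i and j (i.e., v = 𝐮(i)𝐮(i+1)⋯𝐮(i+|v|−1) = 𝐮(j)𝐮(j+1)⋯𝐮(j+|v|−1)), then i ≡ j (mod r). -/
import Mathlib


/-- The factor of the infinite word `w` starting at position `i`, of length `L`. -/
def wordOf {α : Type*} (w : ℕ → α) (i L : ℕ) : List α :=
  (List.range L).map fun k => w (i + k)

/-- The finite word `v` occurs in the infinite word `w` at position `i`. -/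
def OccursAt {α : Type*} (v : List α) (w : ℕ → α) (i : ℕ) : Prop :=
  wordOf w i v.length = v

/-- The finite word `v` is a prefix of the infinite word `w`. -/
def PrefixOfInf {α : Type*} (v : List α) (w : ℕ → α) : Prop :=
  wordOf w 0 v.length = v

/-- The extension of the morphism `h` on `{0,1}` to binary words. -/
def mor (h : Bool → List Bool) (w : List Bool) : List Bool :=
  (w.map h).flatten

/-- The infinite binary word `u` is a fixed point of the morphism `h`:
the image of any prefix of `u` is again a prefix of `u`. -/
def FixedPointOf (h : Bool → List Bool) (u : ℕ → Bool) : Prop :=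
  ∀ p : List Bool, PrefixOfInf p u → PrefixOfInf (mor h p) u

/-- `v` is markable with respect to the `r`-uniform morphism `h` and its fixed point `u`:
whenever `h(X)xv` and `h(Y)yv` are prefixes of `u` with `|x|, |y| < r`, then `x = y`. -/
def Markable (h : Bool → List Bool) (r : ℕ) (u : ℕ → Bool) (v : List Bool) : Prop :=
  ∀ X Y x y : List Bool, x.length < r → y.length < r →
    PrefixOfInf (mor h X ++ x ++ v) u → PrefixOfInf (mor h Y ++ y ++ v) u → x = y

lemma wordOf_length {α : Type*} (w : ℕ → α) (i L : ℕ) : (wordOf w i L).length = L := by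
  simp [wordOf]

lemma wordOf_add {α : Type*} (w : ℕ → α) (i a b : ℕ) :
    wordOf w i (a + b) = wordOf w i a ++ wordOf w (i + a) b := by
  simp only [wordOf, List.range_add, List.map_append, List.map_map]
  congr 1
  apply List.map_congr_left
  intro k _
  simp [Nat.add_assoc]

lemma mor_length (h : Bool → List Bool) (r : ℕ)
    (h0 : (h false).length = r) (h1 : (h true).length = r) (p : List Bool) :
    (mor h p).length = r * p.length := by
  induction p with
  | nil => simp [mor]
  | cons b t ih =>
      have e : mor h (b :: t) = h b ++ mor h t := rfl
      rw [e, List.length_append, ih, List.length_cons, Nat.mul_succ]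
      cases b <;> omega

lemma prefix_piece (h : Bool → List Bool) (r : ℕ) (hr : 1 ≤ r)
    (h0 : (h false).length = r) (h1 : (h true).length = r)
    (u : ℕ → Bool) (hfix : FixedPointOf h u)
    (v : List Bool) (i : ℕ) (hi : OccursAt v u i) :
    PrefixOfInf (mor h (wordOf u 0 (i / r)) ++ wordOf u (r * (i / r)) (i % r) ++ v) u := by
  set q := i / r
  set s := i % r
  have hX : PrefixOfInf (wordOf u 0 q) u := by
    simp [PrefixOfInf, wordOf_length]
  have hmorX := hfix _ hX
  have hlen : (mor h (wordOf u 0 q)).length = r * q := by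
    rw [mor_length h r h0 h1, wordOf_length]
  have hi' : r * q + s = i := Nat.div_add_mod i r
  unfold PrefixOfInf at hmorX ⊢
  rw [hlen] at hmorX
  have L1 : (mor h (wordOf u 0 q) ++ wordOf u (r * q) s ++ v).length
      = i + v.length := by
    simp [hlen, wordOf_length]; omega
  rw [L1]
  have e1 : i + v.length = r * q + (s + v.length) := by omega
  rw [e1, wordOf_add, wordOf_add]
  simp only [Nat.zero_add]
  rw [hmorX, hi', show wordOf u i v.length = v from hi, List.append_assoc]

/-- If `v` is markable with respect to the `r`-uniform morphism `h` and its fixed point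
`𝐮`, and `v` occurs in `𝐮` at positions `i` and `j`, then `i ≡ j (mod r)`. -/
theorem markable_occurrences_mod (h : Bool → List Bool) (r : ℕ) (hr : 1 ≤ r)
    (h0 : (h false).length = r) (h1 : (h true).length = r)
    (u : ℕ → Bool) (hfix : FixedPointOf h u)
    (v : List Bool) (hmark : Markable h r u v)
    (i j : ℕ) (hi : OccursAt v u i) (hj : OccursAt v u j) :
    i ≡ j [MOD r] := by
  have hpi := prefix_piece h r hr h0 h1 u hfix v i hi
  have hpj := prefix_piece h r hr h0 h1 u hfix v j hj
  have hsi : (wordOf u (r * (i / r)) (i % r)).length = i % r := wordOf_length ..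
  have hsj : (wordOf u (r * (j / r)) (j % r)).length = j % r := wordOf_length ..
  have hlt_i : (wordOf u (r * (i / r)) (i % r)).length < r := by
    rw [hsi]; exact Nat.mod_lt _ hr
  have hlt_j : (wordOf u (r * (j / r)) (j % r)).length < r := by
    rw [hsj]; exact Nat.mod_lt _ hr
  have := hmark _ _ _ _ hlt_i hlt_j hpi hpj
  have : i % r = j % r := by rw [← hsi, ← hsj, this]
  exact this
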